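/- arXiv:1205.4438 — 2 statements merged into one kernel-verified Lean document; each statement's English description precedes it below -/
import Mathlib

section
/- Let Ω ⊂ ℝ² be a bounded domain and Φ = φ + iψ holomorphic on a neighborhood of Ω̄ with only finitely many critical points, all nondegenerate. Then for every g ∈ L¹(Ω), ∫_Ω g(x) e^{τ(Φ(x) − Φ̄(x))} dx = ∫_Ω g(x) e^{2iτψ(x)} dx → 0 as τ → +∞. -/
/-!
Away from the finitely many (hence null) critical points, `Φ` is locally injective, so the part of
`Ω` where `Φ' ≠ 0` splits into countably many disjoint measurable pieces on each of which `Φ` is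
injective. On a piece, the change of variables `w = Φ x` (with Jacobian `|Φ'|²`) turns the integral
into `∫ H w e^{τ (w - w̄)} dw = ∫ H w e^{2iτ Im w} dw` for some `H : ℂ → ℂ`, which tends to zero by
the Riemann–Lebesgue lemma on `ℂ`. Since `|e^{τ(Φ - Φ̄)}| = 1`, the pieces are dominated by
`∫ |g|` over them, and dominated convergence for series lets the limit pass through the sum.
-/

open MeasureTheory Filter Set Topology Function Real

theorem HasStrictDerivAt.exists_mem_nhds_injOn {𝕜 : Type*} [NontriviallyNormedField 𝕜]
    [CompleteSpace 𝕜] {f : 𝕜 → 𝕜} {f' a : 𝕜} (hf : HasStrictDerivAt f f' a) (hf' : f' ≠ 0) :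
    ∃ u ∈ 𝓝 a, InjOn f u :=
  ⟨_, hf.eventually_left_inverse hf', LeftInvOn.injOn fun _ hx => hx⟩

theorem IsOpen.exists_nat_open_cover_injOn {X Y : Type*} [TopologicalSpace X]
    [SecondCountableTopology X] {f : X → Y} {V : Set X} (hV : IsOpen V)
    (hloc : ∀ x ∈ V, ∃ u ∈ 𝓝 x, InjOn f u) :
    ∃ B : ℕ → Set X, (∀ n, IsOpen (B n) ∧ InjOn f (B n) ∧ B n ⊆ V) ∧ V ⊆ ⋃ n, B n := by
  set S := {u | IsOpen u ∧ InjOn f u ∧ u ⊆ V}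
  obtain ⟨T, hTc, hTS, hTU⟩ := TopologicalSpace.isOpen_sUnion_countable S fun u hu => hu.1
  -- Adding the harmless `∅` makes the subfamily nonempty, so that it can be enumerated by `ℕ`.
  obtain ⟨B, hB⟩ := (hTc.insert ∅).exists_eq_range (insert_nonempty _ _)
  refine ⟨B, fun n => ?_, fun x hx => ?_⟩
  · rcases (hB ▸ mem_range_self n : B n ∈ insert ∅ T) with h | h
    · simp [h]
    · exact hTS h
  · obtain ⟨u, hu, hinj⟩ := hloc x hx
    obtain ⟨w, hwu, hwo, hxw⟩ := mem_nhds_iff.1 hu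
    have hxS : x ∈ ⋃₀ S :=
      ⟨w ∩ V, ⟨hwo.inter hV, hinj.mono (inter_subset_left.trans hwu), inter_subset_right⟩,
        hxw, hx⟩
    obtain ⟨t, ht, hxt⟩ := hTU ▸ hxS
    obtain ⟨n, rfl⟩ : t ∈ range B := hB ▸ mem_insert_of_mem _ ht
    exact mem_iUnion.2 ⟨n, hxt⟩

theorem tendsto_integral_of_tendsto_setIntegral_iUnion {α ι κ E : Type*} [MeasurableSpace α]
    {μ : Measure α} [NormedAddCommGroup E] [NormedSpace ℝ E] [CompleteSpace E] [Countable κ]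
    {l : Filter ι} {s : κ → Set α} (hs : ∀ n, MeasurableSet (s n))
    (hdisj : Pairwise (Disjoint on s)) (hcover : ∀ᵐ x ∂μ, x ∈ ⋃ n, s n)
    {F : ι → α → E} {bound : α → ℝ} (hbound : Integrable bound μ)
    (hF_meas : ∀ i, AEStronglyMeasurable (F i) μ) (hF_le : ∀ i, ∀ᵐ x ∂μ, ‖F i x‖ ≤ bound x)
    (hlim : ∀ n, Tendsto (fun i => ∫ x in s n, F i x ∂μ) l (𝓝 0)) :
    Tendsto (fun i => ∫ x, F i x ∂μ) l (𝓝 0) := by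
  have hsplit : ∀ i, ∫ x, F i x ∂μ = ∑' n, ∫ x in s n, F i x ∂μ := fun i => by
    rw [← integral_iUnion hs hdisj (hbound.mono' (hF_meas i) (hF_le i)).integrableOn,
      Measure.restrict_eq_self_of_ae_mem hcover]
  have hsum : Summable fun n => ∫ x in s n, bound x ∂μ :=
    (hasSum_integral_iUnion hs hdisj hbound.integrableOn).summable
  have hterm_le : ∀ i n, ‖∫ x in s n, F i x ∂μ‖ ≤ ∫ x in s n, bound x ∂μ := fun i n =>
    norm_integral_le_of_norm_le hbound.integrableOn (ae_restrict_of_ae (hF_le i))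
  simpa only [hsplit, tsum_zero] using
    tendsto_tsum_of_dominated_convergence hsum hlim (Eventually.of_forall hterm_le)

theorem Complex.norm_exp_ofReal_mul_sub_conj (τ : ℝ) (w : ℂ) :
    ‖exp (τ * (w - (starRingEnd ℂ) w))‖ = 1 := by
  rw [norm_exp, sub_conj]
  simp [mul_re]

theorem ContinuousLinearMap.det_restrictScalars_smulRight_one (a : ℂ) :
    (((1 : ℂ →L[ℂ] ℂ).smulRight a).restrictScalars ℝ).det = Complex.normSq a := by
  simp [ContinuousLinearMap.det, LinearMap.det_restrictScalars, Algebra.norm_complex_eq]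

theorem tendsto_integral_mul_exp_sub_conj (H : ℂ → ℂ) :
    Tendsto (fun τ : ℝ => ∫ w, H w * Complex.exp (τ * (w - (starRingEnd ℂ) w))) atTop (𝓝 0) := by
  -- The frequency `-(τ / π) i` is chosen so that `𝐞 (-⟪w, -(τ / π) i⟫) = e^{2iτ Im w}`.
  have hfreq : Tendsto (fun τ : ℝ => (-(τ / π)) • Complex.I) atTop (cocompact ℂ) := by
    rw [← Metric.cobounded_eq_cocompact, ← tendsto_norm_atTop_iff_cobounded]
    refine (tendsto_id.atTop_div_const pi_pos).congr' ?_
    filter_upwards [eventually_ge_atTop 0] with τ hτ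
    simp [abs_of_nonneg hτ, abs_of_pos pi_pos]
  refine ((tendsto_integral_exp_inner_smul_cocompact H).comp hfreq).congr fun τ => ?_
  refine integral_congr_ae (ae_of_all _ fun w => ?_)
  have hinner : inner ℝ w ((-(τ / π)) • Complex.I) = -(τ / π) * w.im := by
    simp [real_inner_eq_re_inner (𝕜 := ℂ), RCLike.inner_apply]
  simp only
  rw [hinner, Circle.smul_def, fourierChar_apply, Complex.sub_conj, smul_eq_mul, mul_comm]
  congr 2
  push_cast
  field_simp

theorem tendsto_setIntegral_mul_exp_sub_conj_of_injOn {s : Set ℂ} (hs : MeasurableSet s)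
    {Φ Φ' : ℂ → ℂ} (hΦ : ∀ x ∈ s, HasDerivWithinAt Φ (Φ' x) s x) (hΦ' : ∀ x ∈ s, Φ' x ≠ 0)
    (hinj : InjOn Φ s) (g : ℂ → ℂ) :
    Tendsto (fun τ : ℝ => ∫ x in s, g x * Complex.exp (τ * (Φ x - (starRingEnd ℂ) (Φ x))))
      atTop (𝓝 0) := by
  have hΦℝ : ∀ x ∈ s, HasFDerivWithinAt Φ
      (((1 : ℂ →L[ℂ] ℂ).smulRight (Φ' x)).restrictScalars ℝ) s x :=
    fun x hx => (hΦ x hx).hasFDerivWithinAt.restrictScalars ℝ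
  have hjac : ∀ x ∈ s,
      |(((1 : ℂ →L[ℂ] ℂ).smulRight (Φ' x)).restrictScalars ℝ).det| = Complex.normSq (Φ' x) :=
    fun x _ => by
      rw [ContinuousLinearMap.det_restrictScalars_smulRight_one,
        abs_of_nonneg (Complex.normSq_nonneg _)]
  set e : ℝ → ℂ → ℂ := fun τ w => Complex.exp (τ * (w - (starRingEnd ℂ) w))
  set G : ℂ → ℂ := fun w =>
    (Complex.normSq (Φ' (invFunOn Φ s w)))⁻¹ • g (invFunOn Φ s w)
  refine (tendsto_integral_mul_exp_sub_conj ((Φ '' s).indicator G)).congr fun τ => ?_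
  calc ∫ w, (Φ '' s).indicator G w * e τ w
      = ∫ w in Φ '' s, G w * e τ w := by
        rw [← integral_indicator (measurable_image_of_fderivWithin hs hΦℝ hinj)]
        simp only [indicator_mul_left]
    _ = ∫ x in s, |(((1 : ℂ →L[ℂ] ℂ).smulRight (Φ' x)).restrictScalars ℝ).det| •
          (G (Φ x) * e τ (Φ x)) :=
        integral_image_eq_integral_abs_det_fderiv_smul volume hs hΦℝ hinj _
    _ = ∫ x in s, g x * e τ (Φ x) := setIntegral_congr_fun hs fun x hx => by
        simp only [G, hinj.leftInvOn_invFunOn hx, hjac x hx, smul_mul_assoc, smul_smul,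
          mul_inv_cancel₀ (Complex.normSq_pos.2 (hΦ' x hx)).ne', one_smul]

theorem tendsto_setIntegral_restrict_mul_exp_sub_conj_of_injOn (Ω : Set ℂ) {s : Set ℂ}
    (hs : MeasurableSet s) {Φ Φ' : ℂ → ℂ} (hΦ : ∀ x ∈ s, HasDerivAt Φ (Φ' x) x)
    (hΦ' : ∀ x ∈ s, Φ' x ≠ 0) (hinj : InjOn Φ s) (g : ℂ → ℂ) :
    Tendsto (fun τ : ℝ => ∫ x in s, g x * Complex.exp (τ * (Φ x - (starRingEnd ℂ) (Φ x)))
      ∂volume.restrict Ω) atTop (𝓝 0) := by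
  -- `Ω` need not be measurable; its measurable hull carries the same restricted measure.
  rw [← Measure.restrict_toMeasurable_of_sFinite Ω]
  simp only [Measure.restrict_restrict hs]
  exact tendsto_setIntegral_mul_exp_sub_conj_of_injOn (hs.inter (measurableSet_toMeasurable _ _))
    (fun x hx => (hΦ x hx.1).hasDerivWithinAt) (fun x hx => hΦ' x hx.1)
    (hinj.mono inter_subset_left) g

theorem stmt2_general (Ω U : Set ℂ) (hU : IsOpen U)
    (hsub : closure Ω ⊆ U) (Φ : ℂ → ℂ) (hΦ : DifferentiableOn ℂ Φ U)
    (hfin : {z ∈ closure Ω | deriv Φ z = 0}.Finite)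
    (g : ℂ → ℂ) (hg : IntegrableOn g Ω) :
    Tendsto (fun τ : ℝ =>
        ∫ x in Ω, g x * Complex.exp (τ * (Φ x - (starRingEnd ℂ) (Φ x))))
      atTop (nhds 0) := by
  have hΦan : AnalyticOnNhd ℂ Φ U := hΦ.analyticOnNhd hU
  set V := U ∩ deriv Φ ⁻¹' {0}ᶜ
  have hV : IsOpen V := hΦan.deriv.continuousOn.isOpen_inter_preimage hU isOpen_compl_singleton
  obtain ⟨B, hB, hVB⟩ := hV.exists_nat_open_cover_injOn fun x hx =>
    (hΦan x hx.1).hasStrictDerivAt.exists_mem_nhds_injOn hx.2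
  have hBmeas : ∀ n, MeasurableSet (disjointed B n) :=
    MeasurableSet.disjointed fun n => (hB n).1.measurableSet
  have hΩV : ∀ᵐ x ∂volume.restrict Ω, x ∈ ⋃ n, disjointed B n := by
    rw [iUnion_disjointed]
    refine (ae_restrict_iff (isOpen_iUnion fun n => (hB n).1).measurableSet).2 ?_
    filter_upwards [hfin.countable.ae_notMem volume] with x hxcrit hxΩ
    exact hVB ⟨hsub (subset_closure hxΩ), fun h => hxcrit ⟨subset_closure hxΩ, h⟩⟩
  have hΦ_meas : AEStronglyMeasurable Φ (volume.restrict Ω) :=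
    (hΦ.continuousOn.aestronglyMeasurable hU.measurableSet).mono_measure
      (Measure.restrict_mono (subset_closure.trans hsub) le_rfl)
  refine tendsto_integral_of_tendsto_setIntegral_iUnion hBmeas (disjoint_disjointed B) hΩV hg.norm
    (fun τ => hg.aestronglyMeasurable.mul
      ((by fun_prop : Continuous fun w : ℂ => Complex.exp (τ * (w - (starRingEnd ℂ) w)))
        |>.comp_aestronglyMeasurable hΦ_meas))
    (fun τ => ae_of_all _ fun x => by simp [Complex.norm_exp_ofReal_mul_sub_conj]) fun n => ?_
  have hBV : disjointed B n ⊆ V := (disjointed_subset B n).trans (hB n).2.2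
  exact tendsto_setIntegral_restrict_mul_exp_sub_conj_of_injOn Ω (hBmeas n)
    (fun x hx => (hΦ.differentiableAt (hU.mem_nhds (hBV hx).1)).hasDerivAt)
    (fun x hx => (hBV hx).2) ((hB n).2.1.mono (disjointed_subset B n)) g

/-- Riemann–Lebesgue type lemma: for `Φ` holomorphic near the closure of a bounded
domain with finitely many, all nondegenerate, critical points, and `g ∈ L¹(Ω)`,
`∫_Ω g e^{τ(Φ - Φ̄)} dx → 0` as `τ → +∞`. -/
theorem stmt2 (Ω U : Set ℂ) (hΩ : Bornology.IsBounded Ω) (hU : IsOpen U)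
    (hsub : closure Ω ⊆ U) (Φ : ℂ → ℂ) (hΦ : DifferentiableOn ℂ Φ U)
    (hfin : {z ∈ closure Ω | deriv Φ z = 0}.Finite)
    (hnd : ∀ z ∈ closure Ω, deriv Φ z = 0 → deriv (deriv Φ) z ≠ 0)
    (g : ℂ → ℂ) (hg : IntegrableOn g Ω) :
    Tendsto (fun τ : ℝ =>
        ∫ x in Ω, g x * Complex.exp (τ * (Φ x - (starRingEnd ℂ) (Φ x))))
      atTop (nhds 0) :=
  stmt2_general Ω U hU hsub Φ hΦ hfin g hg
end

section
/- Let f₁, f₂ : Ω̄ × ℝ → ℝ be C¹ in y with ∂²f₂/∂y² continuous and bounded by L on Ω̄ × [−K,K]. Let u₁, u₂ : Ω̄ × [0,1] → ℝ be continuous with |u_j(x,t)| ≤ K. Suppose (∂f₁/∂y)(x, u₁(x,t)) = (∂f₂/∂y)(x, u₂(x,t)) for all x, t, and that u₁(·,t*) = u₂(·,t*) with f₁(x, u₁(x,t*)) = f₂(x, u₁(x,t*)). Assume further that for each x and each s between u₁(x,t*) and u₁(x,t) there exists t₀ ∈ [0,t] with s = u₁(x, t₀). Then |f₁(x,u₁(x,t))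 − f₂(x,u₁(x,t))| ≤ L · sup_{t̃ ∈ [0,t]} |u₁(x,t̃) − u₂(x,t̃)| · |u₁(x,t) − u₁(x,t*)| for all x ∈ Ω, t ∈ [0,1]. -/
open Set

/-- The pointwise estimate (ooooo): under equality of the `y`-derivatives along the
trajectories, coincidence at `t*`, the intermediate-value hypothesis for the family
`t ↦ u₁(x,t)`, and the bound `L` on `∂²f₂/∂y²` on `[-K,K]`,
`|f₁(x,u₁(x,t)) - f₂(x,u₁(x,t))| ≤ L · sup_{t̃∈[0,t]} |u₁(x,t̃) - u₂(x,t̃)| ·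
|u₁(x,t) - u₁(x,t*)|`. -/
theorem stmt15 (α : Type*) (f₁ f₂ f₁y f₂y f₂yy : α → ℝ → ℝ)
    (hf₁y : ∀ x y, HasDerivAt (f₁ x) (f₁y x y) y)
    (hf₂y : ∀ x y, HasDerivAt (f₂ x) (f₂y x y) y)
    (hf₂yy : ∀ x y, HasDerivAt (f₂y x) (f₂yy x y) y)
    (hf₂yyc : ∀ x, Continuous (f₂yy x))
    (K L : ℝ) (hK : 0 < K) (hL : 0 ≤ L)
    (hLbound : ∀ x, ∀ y ∈ Icc (-K) K, |f₂yy x y| ≤ L)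
    (u₁ u₂ : α → ℝ → ℝ)
    (hu₁c : ∀ x, ContinuousOn (u₁ x) (Icc 0 1))
    (hu₂c : ∀ x, ContinuousOn (u₂ x) (Icc 0 1))
    (hKb : ∀ x, ∀ t ∈ Icc (0:ℝ) 1, |u₁ x t| ≤ K ∧ |u₂ x t| ≤ K)
    (hder : ∀ x, ∀ t ∈ Icc (0:ℝ) 1, f₁y x (u₁ x t) = f₂y x (u₂ x t))
    (tstar : ℝ) (htstar : tstar ∈ Icc (0:ℝ) 1)
    (hcoin : ∀ x, u₁ x tstar = u₂ x tstar)
    (hfcoin : ∀ x, f₁ x (u₁ x tstar) = f₂ x (u₁ x tstar))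
    (hIVT : ∀ x, ∀ t ∈ Icc (0:ℝ) 1, ∀ s ∈ uIcc (u₁ x tstar) (u₁ x t),
      ∃ t₀ ∈ Icc 0 t, u₁ x t₀ = s) :
    ∀ x, ∀ t ∈ Icc (0:ℝ) 1,
      |f₁ x (u₁ x t) - f₂ x (u₁ x t)| ≤
        L * sSup ((fun tt => |u₁ x tt - u₂ x tt|) '' Icc 0 t) *
          |u₁ x t - u₁ x tstar| := by
  intro x t ht
  set M := sSup ((fun tt => |u₁ x tt - u₂ x tt|) '' Icc 0 t) with hM
  have hsub : Icc (0:ℝ) t ⊆ Icc 0 1 := Icc_subset_Icc le_rfl ht.2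
  have hbdd : BddAbove ((fun tt => |u₁ x tt - u₂ x tt|) '' Icc 0 t) := by
    apply IsCompact.bddAbove
    apply isCompact_Icc.image_of_continuousOn
    exact (((hu₁c x).mono hsub).sub ((hu₂c x).mono hsub)).abs
  have hMle : ∀ t₀ ∈ Icc (0:ℝ) t, |u₁ x t₀ - u₂ x t₀| ≤ M :=
    fun t₀ h => le_csSup hbdd (mem_image_of_mem _ h)
  -- Lipschitz bound for f₂y on [-K, K]
  have hLip : ∀ a ∈ Icc (-K) K, ∀ b ∈ Icc (-K) K, |f₂y x a - f₂y x b| ≤ L * |a - b| := by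
    intro a ha b hb
    have := Convex.norm_image_sub_le_of_norm_hasDerivWithin_le
      (f := f₂y x) (f' := f₂yy x) (C := L) (s := Icc (-K) K)
      (fun y hy => (hf₂yy x y).hasDerivWithinAt)
      (fun y hy => hLbound x y hy) (convex_Icc _ _) hb ha
    simpa [Real.norm_eq_abs] using this
  -- bound on the derivative of f₁ - f₂ on the relevant interval
  have hderiv : ∀ y ∈ uIcc (u₁ x tstar) (u₁ x t), |f₁y x y - f₂y x y| ≤ L * M := by
    intro y hy
    obtain ⟨t₀, ht₀, hyt₀⟩ := hIVT x t ht y hy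
    have ht₀1 : t₀ ∈ Icc (0:ℝ) 1 := hsub ht₀
    have hmem := hKb x t₀ ht₀1
    subst hyt₀
    rw [hder x t₀ ht₀1]
    calc |f₂y x (u₂ x t₀) - f₂y x (u₁ x t₀)| ≤ L * |u₂ x t₀ - u₁ x t₀| :=
          hLip _ (abs_le.1 hmem.2) _ (abs_le.1 hmem.1)
      _ = L * |u₁ x t₀ - u₂ x t₀| := by rw [abs_sub_comm]
      _ ≤ L * M := mul_le_mul_of_nonneg_left (hMle t₀ ht₀) hL
  have key := Convex.norm_image_sub_le_of_norm_hasDerivWithin_le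
    (f := fun y => f₁ x y - f₂ x y) (f' := fun y => f₁y x y - f₂y x y) (C := L * M)
    (s := uIcc (u₁ x tstar) (u₁ x t))
    (fun y hy => ((hf₁y x y).sub (hf₂y x y)).hasDerivWithinAt)
    (fun y hy => by simpa [Real.norm_eq_abs] using hderiv y hy)
    (convex_uIcc _ _) left_mem_uIcc right_mem_uIcc
  have h0 : f₁ x (u₁ x tstar) - f₂ x (u₁ x tstar) = 0 := by rw [hfcoin x]; ring
  simpa [Real.norm_eq_abs, h0] using key
end
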